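/- Let b̄, ḅ > 0 and T(x) = (1/2)·ln((b̄·x + b̄·ḅ)/(b̄·ḅ - ḅ·x)) for x ∈ (-ḅ, b̄). If |T(x)| ≤ σ̄ for some σ̄ > 0, then -ḅ·(b̄(1 - exp(-2σ̄)))/(ḅ·exp(-2σ̄) + b̄) ≤ x ≤ b̄·(ḅ(exp(2σ̄) - 1))/(ḅ·exp(2σ̄) + b̄), and in particular x lies in a compact subset strictly inside (-ḅ, b̄). -/

import Mathlib

/-!
Since `T x = ½ log r(x)` with `r(x) = b̄(x + ḅ) / (ḅ(b̄ - x))` positive and strictly increasing on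
`(-ḅ, b̄)`, the bound `|T x| ≤ σ̄` means `exp (-2σ̄) ≤ r(x) ≤ exp (2σ̄)`. Solving `r(x) = c` gives
`x = b̄ ḅ (c - 1) / (ḅ c + b̄)`, which lies strictly inside `(-ḅ, b̄)` for every `c > 0`.
-/

open Real Set

lemma exp_neg_two_mul_le_and_le_exp_two_mul_of_abs_half_log_le {r s : ℝ} (hr : 0 < r)
    (h : |1 / 2 * log r| ≤ s) : exp (-2 * s) ≤ r ∧ r ≤ exp (2 * s) := by
  obtain ⟨hlo, hhi⟩ := abs_le.mp h
  exact ⟨(le_log_iff_exp_le hr).mp (by linarith), (log_le_iff_le_exp hr).mp (by linarith)⟩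

section ModulatedRatio

variable {a b c x : ℝ}

lemma modulatedRatio_pos (hx : x ∈ Ioo (-b) a) (ha : 0 < a) (hb : 0 < b) :
    0 < (a * x + a * b) / (a * b - b * x) := by
  obtain ⟨hlo, hhi⟩ := hx
  apply div_pos <;> nlinarith

lemma modulatedRatio_le_iff (hx : x < a) (ha : 0 < a) (hb : 0 < b) (hc : 0 < c) :
    (a * x + a * b) / (a * b - b * x) ≤ c ↔ x ≤ a * (b * (c - 1)) / (b * c + a) := by
  have hden : 0 < a * b - b * x := by nlinarith
  rw [div_le_iff₀ hden, le_div_iff₀ (by positivity)]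
  constructor <;> intro h <;> nlinarith

lemma le_modulatedRatio_iff (hx : x < a) (ha : 0 < a) (hb : 0 < b) (hc : 0 < c) :
    c ≤ (a * x + a * b) / (a * b - b * x) ↔ -b * (a * (1 - c)) / (b * c + a) ≤ x := by
  have hden : 0 < a * b - b * x := by nlinarith
  rw [le_div_iff₀ hden, div_le_iff₀ (by positivity)]
  constructor <;> intro h <;> nlinarith

lemma neg_lt_lowerBound (ha : 0 < a) (hb : 0 < b) (hc : 0 < c) :
    -b < -b * (a * (1 - c)) / (b * c + a) := by
  rw [lt_div_iff₀ (by positivity)]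
  nlinarith [mul_pos (mul_pos hb hc) (add_pos ha hb)]

lemma upperBound_lt (ha : 0 < a) (hb : 0 < b) (hc : 0 < c) :
    a * (b * (c - 1)) / (b * c + a) < a := by
  rw [div_lt_iff₀ (by positivity)]
  nlinarith [mul_pos ha hb, mul_pos ha ha]

end ModulatedRatio

theorem stmt_8_general (bbar blo : ℝ) (hbbar : 0 < bbar) (hblo : 0 < blo)
    (T : ℝ → ℝ)
    (hT : ∀ x, T x = (1 / 2) * Real.log ((bbar * x + bbar * blo) / (bbar * blo - blo * x)))
    (σbar : ℝ)
    (x : ℝ) (hx : x ∈ Set.Ioo (-blo) bbar) (hTx : |T x| ≤ σbar) :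
    (-blo * (bbar * (1 - Real.exp (-2 * σbar))) / (blo * Real.exp (-2 * σbar) + bbar) ≤ x ∧
      x ≤ bbar * (blo * (Real.exp (2 * σbar) - 1)) / (blo * Real.exp (2 * σbar) + bbar)) ∧
    -blo < -blo * (bbar * (1 - Real.exp (-2 * σbar))) / (blo * Real.exp (-2 * σbar) + bbar) ∧
    bbar * (blo * (Real.exp (2 * σbar) - 1)) / (blo * Real.exp (2 * σbar) + bbar) < bbar := by
  rw [hT] at hTx
  obtain ⟨hlo, hhi⟩ :=
    exp_neg_two_mul_le_and_le_exp_two_mul_of_abs_half_log_le (modulatedRatio_pos hx hbbar hblo) hTx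
  exact ⟨⟨(le_modulatedRatio_iff hx.2 hbbar hblo (exp_pos _)).mp hlo,
      (modulatedRatio_le_iff hx.2 hbbar hblo (exp_pos _)).mp hhi⟩,
    neg_lt_lowerBound hbbar hblo (exp_pos _), upperBound_lt hbbar hblo (exp_pos _)⟩

theorem stmt_8 (bbar blo : ℝ) (hbbar : 0 < bbar) (hblo : 0 < blo)
    (T : ℝ → ℝ)
    (hT : ∀ x, T x = (1 / 2) * Real.log ((bbar * x + bbar * blo) / (bbar * blo - blo * x)))
    (σbar : ℝ) (hσbar : 0 < σbar)
    (x : ℝ) (hx : x ∈ Set.Ioo (-blo) bbar) (hTx : |T x| ≤ σbar) :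
    (-blo * (bbar * (1 - Real.exp (-2 * σbar))) / (blo * Real.exp (-2 * σbar) + bbar) ≤ x ∧
      x ≤ bbar * (blo * (Real.exp (2 * σbar) - 1)) / (blo * Real.exp (2 * σbar) + bbar)) ∧
    -blo < -blo * (bbar * (1 - Real.exp (-2 * σbar))) / (blo * Real.exp (-2 * σbar) + bbar) ∧
    bbar * (blo * (Real.exp (2 * σbar) - 1)) / (blo * Real.exp (2 * σbar) + bbar) < bbar :=
  stmt_8_general bbar blo hbbar hblo T hT σbar x hx hTx
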